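/- For each integer m ≥ 2 let u_m denote the number of tuples x = (x_1, …, x_{m−1}) of nonnegative integers satisfying (Ax)_i ≥ 0 for all 1 ≤ i ≤ m−1 (with x_0 = x_m = 0) and x_1 + x_{m−1} ≤ 3. Then for every n ≥ 6: u_n = 2·u_{n−1} − u_{n−2} + 1 if n ≡ 0 or 2 (mod 3), and u_n = 2·u_{n−1} − u_{n−2} − 1 if n ≡ 1 (mod 3). -/
import Mathlib

open Finset



/-- raw min formula, integer input -/
def graw (m p q r : ℕ) (j : ℤ) : ℤ :=
  min (min (2*j) ((p:ℤ)+j)) (min (q:ℤ) (min (2*((m:ℤ)-j)) ((r:ℤ)+((m:ℤ)-j))))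

def gfun (m p q r : ℕ) : ℕ → ℤ := fun i =>
  if i = 0 ∨ m ≤ i then 0 else graw m p q r i

lemma gfun_eq_graw (m p q r : ℕ) (i : ℕ) (hi : i ≤ m) :
    gfun m p q r i = graw m p q r i := by
  unfold gfun graw
  split_ifs with h
  · rcases h with h | h
    · subst h; simp; omega
    · have : i = m := le_antisymm hi h
      subst this; simp; omega
  · rfl

/-- parameter finset -/
def Pset (m : ℕ) : Finset (ℕ × ℕ × ℕ) :=
  ((range (m+1)) ×ˢ (range (m+1)) ×ˢ (range (m+1))).filter
    (fun t => (t.1 = 0 ∨ t.2.2 = 0) ∧ 2*t.1 ≤ t.2.1 ∧ 2*t.2.2 ≤ t.2.1 ∧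
      2*t.2.1 ≤ m + t.1 + t.2.2 ∧ (t.2.1 = 0 → t.1 = 0 ∧ t.2.2 = 0))

lemma mem_Pset {m : ℕ} {p q r : ℕ} :
    (p,q,r) ∈ Pset m ↔ ((p = 0 ∨ r = 0) ∧ 2*p ≤ q ∧ 2*r ≤ q ∧
      2*q ≤ m + p + r ∧ (q = 0 → p = 0 ∧ r = 0)) := by
  unfold Pset
  simp only [mem_filter, mem_product, mem_range]
  constructor
  · rintro ⟨-, h⟩; exact h
  · rintro h; refine ⟨⟨?_, ?_, ?_⟩, h⟩ <;> omega

def Sset (m : ℕ) : Set (ℕ → ℤ) :=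
  {x : ℕ → ℤ |
    (∀ i, i = 0 ∨ m ≤ i → x i = 0) ∧
    (∀ i, 1 ≤ i → i ≤ m - 1 → 0 ≤ x i) ∧
    (∀ i, 1 ≤ i → i ≤ m - 1 → 0 ≤ -x (i - 1) + 2 * x i - x (i + 1)) ∧
    x 1 + x (m - 1) ≤ 3}

section params
variable {m p q r : ℕ} (hm : 2 ≤ m) (hpr : p = 0 ∨ r = 0) (h2p : 2*p ≤ q)
  (h2r : 2*r ≤ q) (hq : 2*q ≤ m + p + r) (hq0 : q = 0 → p = 0 ∧ r = 0)

include hm hpr h2p h2r hq hq0 in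
lemma gfun_mem : gfun m p q r ∈ Sset m := by
  refine ⟨fun i hi => by unfold gfun; simp [hi], ?_, ?_, ?_⟩
  · intro i h1 h2
    rw [gfun_eq_graw m p q r i (by omega)]
    have hi' : (i:ℤ) ≤ (m:ℤ) - 1 := by
      have : i ≤ m - 1 := h2
      omega
    unfold graw
    have : (1:ℤ) ≤ i := by exact_mod_cast h1
    omega
  · intro i h1 h2
    have h2' : i + 1 ≤ m := by omega
    rw [gfun_eq_graw m p q r (i-1) (by omega), gfun_eq_graw m p q r i (by omega),
      gfun_eq_graw m p q r (i+1) (by omega)]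
    have hc : ((i - 1 : ℕ) : ℤ) = (i:ℤ) - 1 := by
      have := Nat.cast_sub (by omega : 1 ≤ i) (R := ℤ); simpa using this
    rw [hc]
    unfold graw
    push_cast
    omega
  · have e1 : gfun m p q r 1 = graw m p q r 1 := gfun_eq_graw _ _ _ _ _ (by omega)
    have e2 := gfun_eq_graw m p q r (m-1) (by omega : m - 1 ≤ m)
    have hc : ((m - 1 : ℕ) : ℤ) = (m:ℤ) - 1 := by
      have := Nat.cast_sub (by omega : 1 ≤ m) (R := ℤ); simpa using this
    rw [hc] at e2
    rw [e1, e2]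
    unfold graw
    have : (2:ℤ) ≤ m := by exact_mod_cast hm
    have hp : (0:ℤ) ≤ p := by positivity
    have hr : (0:ℤ) ≤ r := by positivity
    have h2p' : 2*(p:ℤ) ≤ q := by exact_mod_cast h2p
    have h2r' : 2*(r:ℤ) ≤ q := by exact_mod_cast h2r
    have hq' : 2*(q:ℤ) ≤ (m:ℤ) + p + r := by exact_mod_cast hq
    have hpr' : (p:ℤ) = 0 ∨ (r:ℤ) = 0 := by rcases hpr with h|h <;> [left; right] <;> simp [h]
    have hq0' : (q:ℤ) = 0 → (p:ℤ) = 0 ∧ (r:ℤ) = 0 := by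
      intro h; have : q = 0 := by exact_mod_cast h
      obtain ⟨a,b⟩ := hq0 this; constructor <;> simp [a,b]
    omega

include h2p h2r hq hpr in
lemma gfun_le_q : ∀ i : ℕ, gfun m p q r i ≤ q := by
  intro i
  unfold gfun
  split_ifs with h
  · positivity
  · unfold graw; omega

include hm hpr h2p h2r hq in
lemma gfun_attains (hq1 : 1 ≤ q) : gfun m p q r (q - p) = q := by
  have hqm : q ≤ m := by omega
  have h1 : 1 ≤ q - p := by omega
  have h2 : q - p ≤ m := by omega
  rw [gfun_eq_graw m p q r (q-p) h2]
  have hc : ((q - p : ℕ) : ℤ) = (q:ℤ) - p := by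
    have := Nat.cast_sub (by omega : p ≤ q) (R := ℤ); simpa using this
  unfold graw
  rw [hc]
  have h2p' : 2*(p:ℤ) ≤ q := by exact_mod_cast h2p
  have h2r' : 2*(r:ℤ) ≤ q := by exact_mod_cast h2r
  have hq' : 2*(q:ℤ) ≤ (m:ℤ) + p + r := by exact_mod_cast hq
  have hpr' : (p:ℤ) = 0 ∨ (r:ℤ) = 0 := by rcases hpr with h|h <;> [left; right] <;> simp [h]
  have hq1' : (1:ℤ) ≤ q := by exact_mod_cast hq1
  omega

include hm hpr h2p h2r hq hq0 in
lemma gfun_tail : ∀ i : ℕ, 1 ≤ i → i ≤ m →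
    (gfun m p q r i - gfun m p q r (i-1) = -2 ↔ m - r < i) := by
  intro i h1 h2
  rw [gfun_eq_graw m p q r i (by omega), gfun_eq_graw m p q r (i-1) (by omega)]
  have hc : ((i - 1 : ℕ) : ℤ) = (i:ℤ) - 1 := by
    have := Nat.cast_sub (by omega : 1 ≤ i) (R := ℤ); simpa using this
  rw [hc]
  unfold graw
  have h2p' : 2*(p:ℤ) ≤ q := by exact_mod_cast h2p
  have h2r' : 2*(r:ℤ) ≤ q := by exact_mod_cast h2r
  have hq' : 2*(q:ℤ) ≤ (m:ℤ) + p + r := by exact_mod_cast hq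
  have hpr' : (p:ℤ) = 0 ∨ (r:ℤ) = 0 := by rcases hpr with h|h <;> [left; right] <;> simp [h]
  have h1' : (1:ℤ) ≤ i := by exact_mod_cast h1
  have h2'' : (i:ℤ) ≤ m := by exact_mod_cast h2
  have hiff : (m - r < i) ↔ ((m:ℤ) - r < i) := by omega
  rw [hiff]
  have hq0' : (q:ℤ) = 0 → (p:ℤ) = 0 ∧ (r:ℤ) = 0 := by
    intro h; have : q = 0 := by exact_mod_cast h
    obtain ⟨a,b⟩ := hq0 this; constructor <;> simp [a,b]
  omega

include hm hpr h2p h2r hq hq0 in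
lemma gfun_head : ∀ i : ℕ, 1 ≤ i → i ≤ m →
    (gfun m p q r i - gfun m p q r (i-1) = 2 ↔ i ≤ p) := by
  intro i h1 h2
  rw [gfun_eq_graw m p q r i (by omega), gfun_eq_graw m p q r (i-1) (by omega)]
  have hc : ((i - 1 : ℕ) : ℤ) = (i:ℤ) - 1 := by
    have := Nat.cast_sub (by omega : 1 ≤ i) (R := ℤ); simpa using this
  rw [hc]
  unfold graw
  have h2p' : 2*(p:ℤ) ≤ q := by exact_mod_cast h2p
  have h2r' : 2*(r:ℤ) ≤ q := by exact_mod_cast h2r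
  have hq' : 2*(q:ℤ) ≤ (m:ℤ) + p + r := by exact_mod_cast hq
  have hpr' : (p:ℤ) = 0 ∨ (r:ℤ) = 0 := by rcases hpr with h|h <;> [left; right] <;> simp [h]
  have h1' : (1:ℤ) ≤ i := by exact_mod_cast h1
  have h2'' : (i:ℤ) ≤ m := by exact_mod_cast h2
  have hiff : (i ≤ p) ↔ ((i:ℤ) ≤ p) := by omega
  rw [hiff]
  have hq0' : (q:ℤ) = 0 → (p:ℤ) = 0 ∧ (r:ℤ) = 0 := by
    intro h; have : q = 0 := by exact_mod_cast h
    obtain ⟨a,b⟩ := hq0 this; constructor <;> simp [a,b]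
  omega

end params


section machine
variable {m : ℕ} {x : ℕ → ℤ} (hm : 2 ≤ m)
  (hx0 : ∀ i, i = 0 ∨ m ≤ i → x i = 0)
  (hpos : ∀ i, 1 ≤ i → i ≤ m - 1 → 0 ≤ x i)
  (hconc : ∀ i, 1 ≤ i → i ≤ m - 1 → 0 ≤ -x (i - 1) + 2 * x i - x (i + 1))

include hm hconc in
lemma dmono : ∀ i j, 1 ≤ i → i ≤ j → j ≤ m → x j - x (j-1) ≤ x i - x (i-1) := by
  intro i j h1 hij hjm
  induction j with
  | zero => omega
  | succ k ih =>
    rcases Nat.lt_or_ge i (k+1) with h | h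
    · have hk1 : 1 ≤ k := by omega
      have step : x (k+1) - x k ≤ x k - x (k-1) := by
        have := hconc k hk1 (by omega)
        omega
      have := ih (by omega) (by omega)
      have hk : k + 1 - 1 = k := by omega
      rw [hk]
      omega
    · have : i = k + 1 := by omega
      subst this; omega

include hm hx0 hconc in
lemma upslope : ∀ i, i ≤ m → x i ≤ x 1 * i := by
  intro i
  induction i with
  | zero => intro _; simp [hx0 0 (Or.inl rfl)]
  | succ k ih =>
    intro hk
    have hx1 : x (k+1) - x k ≤ x 1 - x 0 := by
      have := dmono hm hconc 1 (k+1) le_rfl (by omega) hk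
      simpa using this
    have h0 : x 0 = 0 := hx0 0 (Or.inl rfl)
    have := ih (by omega)
    push_cast
    rw [h0] at hx1
    nlinarith [this, hx1]

include hm hx0 hconc in
lemma downslope : ∀ k, k ≤ m → x (m - k) ≤ x (m-1) * k := by
  intro k
  induction k with
  | zero =>
    intro _
    have h0 : x (m - 0) = 0 := hx0 _ (by omega)
    simp only [Nat.sub_zero] at *
    simp [h0]
  | succ k ih =>
    intro hk
    have hd : x (m-k) - x (m-k-1) ≥ x m - x (m-1) := by
      have := dmono hm hconc (m-k) m (by omega) (by omega) le_rfl
      have he : m - k - 1 = (m - k) - 1 := rfl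
      omega
    have hxm : x m = 0 := hx0 m (Or.inr le_rfl)
    have := ih (by omega)
    have he : m - (k+1) = m - k - 1 := by omega
    rw [he]
    push_cast
    nlinarith [this, hd, hxm]

lemma nondecr_of (a : ℕ) (h : ∀ k, 1 ≤ k → k ≤ a → 0 ≤ x k - x (k-1)) :
    ∀ s t, s ≤ t → t ≤ a → x s ≤ x t := by
  intro s t hst hta
  induction t with
  | zero =>
    have hs : s = 0 := by omega
    subst hs; exact le_refl _
  | succ k ih =>
    rcases Nat.lt_or_ge s (k+1) with hlt | hge
    · have h1 := ih (by omega) (by omega)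
      have h2 := h (k+1) (by omega) hta
      simp only [Nat.add_sub_cancel] at h2
      omega
    · have : s = k + 1 := by omega
      subst this; exact le_refl _

lemma nonincr_of (a : ℕ) (h : ∀ k, a + 1 ≤ k → k ≤ m → x k - x (k-1) ≤ 0) :
    ∀ s t, a ≤ s → s ≤ t → t ≤ m → x t ≤ x s := by
  intro s t has hst htm
  induction t with
  | zero =>
    have hs : s = 0 := by omega
    subst hs; exact le_refl _
  | succ k ih =>
    rcases Nat.lt_or_ge s (k+1) with hlt | hge
    · have h1 := ih (by omega) (by omega)
      have h2 := h (k+1) (by omega) htm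
      simp only [Nat.add_sub_cancel] at h2
      omega
    · have : s = k + 1 := by omega
      subst this; exact le_refl _

include hx0 in
lemma ge_of_all_ones : ∀ i, i ≤ m → (∀ j, 1 ≤ j → j ≤ i → 1 ≤ x j - x (j-1)) → (i:ℤ) ≤ x i := by
  intro i
  induction i with
  | zero => intro _ _; simp [hx0 0 (Or.inl rfl)]
  | succ k ih =>
    intro hk h
    have h1 := ih (by omega) (fun j h1 h2 => h j h1 (by omega))
    have h2 := h (k+1) (by omega) le_rfl
    simp only [Nat.add_sub_cancel] at h2
    push_cast
    omega

end machine

section machine2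
variable {m : ℕ} {x : ℕ → ℤ}

lemma machine (hm : 2 ≤ m)
    (hx0 : ∀ i, i = 0 ∨ m ≤ i → x i = 0)
    (hpos : ∀ i, 1 ≤ i → i ≤ m - 1 → 0 ≤ x i)
    (hconc : ∀ i, 1 ≤ i → i ≤ m - 1 → 0 ≤ -x (i - 1) + 2 * x i - x (i + 1))
    (h1 : x 1 ≤ 1) (hm1 : x (m-1) ≤ 2) :
    ∃ q r : ℕ, x = gfun m 0 q r ∧ 2*r ≤ q ∧ 2*q ≤ m + r ∧ (q = 0 → r = 0) ∧
      (2 ≤ x (m-1) → 1 ≤ r) := by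
  have hxm : x m = 0 := hx0 m (Or.inr le_rfl)
  have hx00 : x 0 = 0 := hx0 0 (Or.inl rfl)
  obtain ⟨i₀, hi₀I, hmax'⟩ := Finset.exists_max_image (Finset.Icc 0 m) x ⟨0, by simp⟩
  have hi₀m : i₀ ≤ m := by simpa using hi₀I
  set qZ := x i₀ with hqZ
  have hq0 : 0 ≤ qZ := by
    have := hmax' 0 (by simp)
    omega
  have hle : ∀ j, x j ≤ qZ := by
    intro j
    rcases Nat.lt_or_ge j (m+1) with h | h
    · exact hmax' j (by simp; omega)
    · rw [hx0 j (by omega)]; exact hq0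
  have hdm : ∀ j, 1 ≤ j → j ≤ m → -2 ≤ x j - x (j-1) := by
    intro j hj1 hjm
    have := dmono hm hconc j m hj1 hjm le_rfl
    omega
  -- the tail threshold b
  obtain ⟨b, hb1, hbm1, hbkey⟩ : ∃ b, 1 ≤ b ∧ b ≤ m + 1 ∧
      ∀ j, 1 ≤ j → j ≤ m → (x j - x (j-1) ≤ -2 ↔ b ≤ j) := by
    by_cases hB : ∃ j, 1 ≤ j ∧ j ≤ m ∧ x j - x (j-1) ≤ -2
    · refine ⟨Nat.find hB, ?_, ?_, ?_⟩
      · exact (Nat.find_spec hB).1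
      · have := (Nat.find_spec hB).2.1; omega
      · intro j hj1 hjm
        constructor
        · intro hd
          by_contra hlt
          have hmin := Nat.find_min hB (m := j) (by omega)
          exact hmin ⟨hj1, hjm, hd⟩
        · intro hbj
          obtain ⟨hs1, hs2, hs3⟩ := Nat.find_spec hB
          have := dmono hm hconc (Nat.find hB) j hs1 hbj hjm
          omega
    · refine ⟨m+1, by omega, le_rfl, ?_⟩
      intro j hj1 hjm
      constructor
      · intro hd; exact absurd ⟨j, hj1, hjm, hd⟩ hB
      · omega
  set r : ℕ := m + 1 - b with hr
  -- exact values on the tail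
  have M5 : ∀ k, k ≤ m + 1 - b → x (m - k) = 2*(k:ℤ) := by
    intro k
    induction k with
    | zero => intro _; simpa using hxm
    | succ k ih =>
      intro hk
      have hmk1 : 1 ≤ m - k := by omega
      have hd2 : x (m-k) - x (m-k-1) ≤ -2 := (hbkey (m-k) hmk1 (by omega)).2 (by omega)
      have hd2' : -2 ≤ x (m-k) - x (m-k-1) := by
        have := hdm (m-k) hmk1 (by omega)
        omega
      have hprev := ih (by omega)
      have he : m - (k+1) = m - k - 1 := by omega
      rw [he]
      push_cast
      omega
  have hxb : x (b-1) = 2*((m:ℤ) + 1 - b) := by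
    have := M5 (m+1-b) le_rfl
    have he : m - (m+1-b) = b - 1 := by omega
    rw [he] at this
    rw [this]
    push_cast
    omega
  -- upper bound x i ≤ r + (m - i)
  have M6aux : ∀ t, t ≤ b-1 → x (b-1-t) ≤ x (b-1) + t := by
    intro t
    induction t with
    | zero => intro _; simp
    | succ t ih =>
      intro ht
      have hj1 : 1 ≤ b-1-t := by omega
      have hjb : ¬ (b ≤ b-1-t) := by omega
      have hd : -1 ≤ x (b-1-t) - x (b-1-t-1) := by
        have hk := hbkey (b-1-t) hj1 (by omega)
        have := hk.1
        omega
      have hprev := ih (by omega)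
      have he : b - 1 - (t+1) = b-1-t-1 := by omega
      rw [he]
      push_cast
      omega
  have M6 : ∀ i, i ≤ m → x i ≤ (r:ℤ) + ((m:ℤ) - i) := by
    intro i him
    rcases Nat.lt_or_ge i (b-1) with hlt | hge
    · have key := M6aux (b-1-i) (by omega)
      have he : b-1-(b-1-i) = i := by omega
      rw [he] at key
      rw [hxb] at key
      have : ((b-1-i:ℕ):ℤ) = (b:ℤ) - 1 - i := by
        push_cast
        omega
      omega
    · have := M5 (m-i) (by omega)
      have he : m - (m-i) = i := by omega
      rw [he] at this
      rw [this]
      have : ((m-i:ℕ):ℤ) = (m:ℤ) - i := by push_cast; omega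
      omega
  -- upper bound x i ≤ 2 (m-i)
  have M3' : ∀ i, i ≤ m → x i ≤ 2*((m:ℤ) - i) := by
    intro i him
    have hds := downslope hm hx0 hconc (m-i) (by omega)
    have he : m - (m-i) = i := by omega
    rw [he] at hds
    have hc : ((m-i:ℕ):ℤ) = (m:ℤ) - i := by push_cast; omega
    rw [hc] at hds
    have hpos1 : (0:ℤ) ≤ (m:ℤ) - i := by
      have : (i:ℤ) ≤ m := by exact_mod_cast him
      omega
    nlinarith [hds, hm1, hpos1]
  -- upper bound x i ≤ i
  have M2' : ∀ i, i ≤ m → x i ≤ (i:ℤ) := by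
    intro i him
    have := upslope hm hx0 hconc i him
    have hi0 : (0:ℤ) ≤ (i:ℤ) := by positivity
    nlinarith [this, h1, hi0]
  -- lower bound, left of the peak
  have M8 : ∀ i, i ≤ i₀ → x i < i → qZ ≤ x i := by
    intro i hii hlt
    have him : i ≤ m := le_trans hii hi₀m
    have hex : ∃ j, 1 ≤ j ∧ j ≤ i ∧ x j - x (j-1) ≤ 0 := by
      by_contra hno
      push_neg at hno
      have : (i:ℤ) ≤ x i := by
        apply ge_of_all_ones hx0 i him
        intro j hj1 hji
        have := hno j hj1 hji
        omega
      omega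
    obtain ⟨j, hj1, hji, hjd⟩ := hex
    have hdec : ∀ k, (j-1) + 1 ≤ k → k ≤ m → x k - x (k-1) ≤ 0 := by
      intro k hk1 hkm
      have hjk : j ≤ k := by omega
      have := dmono hm hconc j k hj1 hjk hkm
      omega
    have := nonincr_of (a := j-1) (m := m) hdec i i₀ (by omega) hii hi₀m
    omega
  -- lower bound, right of the peak
  have M9 : ∀ i, i₀ ≤ i → i ≤ m →
      min qZ (min (2*((m:ℤ)-i)) ((r:ℤ) + ((m:ℤ)-i))) ≤ x i := by
    intro i hii him
    rcases Nat.lt_or_ge i (b-1) with hlt | hge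
    · rcases le_or_gt 0 (x (i+1) - x i) with hd0 | hd0
      · -- nondecreasing up to i+1
        have hinc : ∀ k, 1 ≤ k → k ≤ i+1 → 0 ≤ x k - x (k-1) := by
          intro k hk1 hki
          have := dmono hm hconc k (i+1) hk1 hki (by omega)
          simp only [Nat.add_sub_cancel] at this
          omega
        have := nondecr_of (x := x) (a := i+1) hinc i₀ i hii (by omega)
        have hmin : min qZ (min (2*((m:ℤ)-i)) ((r:ℤ) + ((m:ℤ)-i))) ≤ qZ := min_le_left _ _
        omega
      · -- all slopes -1 between i and b-1
        have aux2 : ∀ t, t ≤ b-1-i → x (b-1-t) = x (b-1) + t := by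
          intro t
          induction t with
          | zero => intro _; simp
          | succ t ih =>
            intro ht
            have hj1 : i + 1 ≤ b-1-t := by omega
            have hjm : b-1-t ≤ m := by omega
            have hdlow : -1 ≤ x (b-1-t) - x (b-1-t-1) := by
              have hk := hbkey (b-1-t) (by omega) hjm
              have := hk.1
              omega
            have hdhigh : x (b-1-t) - x (b-1-t-1) ≤ -1 := by
              have := dmono hm hconc (i+1) (b-1-t) (by omega) hj1 hjm
              simp only [Nat.add_sub_cancel] at this
              omega
            have hprev := ih (by omega)
            have he : b - 1 - (t+1) = b-1-t-1 := by omega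
            rw [he]
            push_cast
            omega
        have key := aux2 (b-1-i) le_rfl
        have he : b-1-(b-1-i) = i := by omega
        rw [he, hxb] at key
        have hc : ((b-1-i:ℕ):ℤ) = (b:ℤ) - 1 - i := by push_cast; omega
        rw [hc] at key
        have hc2 : (r:ℤ) = (m:ℤ) + 1 - b := by push_cast; omega
        have : x i = (r:ℤ) + ((m:ℤ) - i) := by
          rw [key, hc2]; ring
        rw [this]
        exact le_trans (min_le_right _ _) (min_le_right _ _)
    · have := M5 (m-i) (by omega)
      have he : m - (m-i) = i := by omega
      rw [he] at this
      have hc : ((m-i:ℕ):ℤ) = (m:ℤ) - i := by push_cast; omega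
      rw [hc] at this
      rw [this]
      exact le_trans (min_le_right _ _) (min_le_left _ _)
  -- now assemble
  refine ⟨qZ.toNat, r, ?_, ?_, ?_, ?_, ?_⟩
  · funext i
    rcases Nat.lt_or_ge i m with him | him
    · rcases Nat.eq_zero_or_pos i with h0 | h0
      · subst h0; simp [hx00, gfun]
      · rw [gfun_eq_graw m 0 qZ.toNat r i (by omega)]
        unfold graw
        have e1 := M2' i (by omega)
        have e2 := hle i
        have e3 := M3' i (by omega)
        have e4 := M6 i (by omega)
        have e5 : (qZ.toNat : ℤ) = qZ := Int.toNat_of_nonneg hq0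
        rw [e5]
        rcases Nat.lt_or_ge i₀ i with hcase | hcase
        · have := M9 i (by omega) (by omega)
          omega
        · have := M8 i (by omega)
          have hi' : (0:ℤ) ≤ i := by positivity
          rcases lt_or_ge (x i) i with hxi | hxi
          · have := this hxi
            omega
          · omega
    · rw [hx0 i (by omega)]
      unfold gfun
      simp [him]
  · have := hle (b-1)
    rw [hxb] at this
    have : 2*((m:ℤ)+1-b) ≤ qZ := this
    omega
  · have e1 := M2' i₀ hi₀m
    have e2 := M6 i₀ hi₀m
    omega
  · intro hq
    have hqZ0 : qZ = 0 := by omega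
    by_contra hrne
    have hbm : b ≤ m := by omega
    have hd := (hbkey b hb1 hbm).2 le_rfl
    have hxbm : x b ≥ 0 := by
      rcases Nat.lt_or_ge b m with h | h
      · exact hpos b hb1 (by omega)
      · have : b = m := by omega
        rw [this, hxm]
    have := hle (b-1)
    omega
  · intro h2
    by_contra hrne
    have hbm : b = m + 1 := by omega
    have := (hbkey m (by omega) le_rfl).1
    omega

end machine2

section refl
variable {m : ℕ}

lemma refl_gfun (p q r : ℕ) : (fun i => gfun m p q r (m - i)) = gfun m r q p := by
  funext i
  rcases Nat.lt_or_ge i m with him | him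
  · rcases Nat.eq_zero_or_pos i with h0 | h0
    · subst h0
      simp only [Nat.sub_zero]
      unfold gfun
      simp
    · have h1 : 1 ≤ m - i := by omega
      have h2 : m - i ≤ m := by omega
      rw [gfun_eq_graw m p q r (m-i) h2, gfun_eq_graw m r q p i (by omega)]
      unfold graw
      have hc : ((m-i:ℕ):ℤ) = (m:ℤ) - i := by push_cast; omega
      rw [hc]
      omega
  · have : m - i = 0 := by omega
    rw [this]
    show gfun m p q r 0 = gfun m r q p i
    unfold gfun
    rw [if_pos (Or.inl rfl), if_pos (Or.inr him)]

lemma refl_mem (hm : 2 ≤ m) {x : ℕ → ℤ}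
    (hx0 : ∀ i, i = 0 ∨ m ≤ i → x i = 0)
    (hpos : ∀ i, 1 ≤ i → i ≤ m - 1 → 0 ≤ x i)
    (hconc : ∀ i, 1 ≤ i → i ≤ m - 1 → 0 ≤ -x (i - 1) + 2 * x i - x (i + 1)) :
    (∀ i, i = 0 ∨ m ≤ i → x (m - i) = 0) ∧
    (∀ i, 1 ≤ i → i ≤ m - 1 → 0 ≤ x (m - i)) ∧
    (∀ i, 1 ≤ i → i ≤ m - 1 → 0 ≤ -x (m - (i-1)) + 2 * x (m - i) - x (m - (i+1))) := by
  refine ⟨?_, ?_, ?_⟩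
  · intro i hi
    rcases hi with h | h
    · subst h; simpa using hx0 m (Or.inr le_rfl)
    · have : m - i = 0 := by omega
      rw [this]; exact hx0 0 (Or.inl rfl)
  · intro i h1 h2
    exact hpos (m-i) (by omega) (by omega)
  · intro i h1 h2
    have := hconc (m-i) (by omega) (by omega)
    have e1 : m - i - 1 = m - (i+1) := by omega
    have e2 : m - i + 1 = m - (i-1) := by omega
    rw [e1, e2] at this
    omega

end refl

lemma Sset_eq {m : ℕ} (hm : 2 ≤ m) :
    Sset m = (fun t : ℕ×ℕ×ℕ => gfun m t.1 t.2.1 t.2.2) '' ↑(Pset m) := by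
  apply Set.Subset.antisymm
  · rintro x ⟨hx0, hpos, hconc, hsum⟩
    have hx1pos : 0 ≤ x 1 := hpos 1 le_rfl (by omega)
    have hxm1pos : 0 ≤ x (m-1) := hpos (m-1) (by omega) le_rfl
    by_cases hc1 : x 1 ≤ 1
    · have hm1 : x (m-1) ≤ 2 := by
        rcases lt_or_ge (x 1) 1 with h0 | h0
        · -- x 1 = 0 : x is nonincreasing
          have hdec : ∀ k, 0 + 1 ≤ k → k ≤ m → x k - x (k-1) ≤ 0 := by
            intro k hk1 hkm
            have := dmono hm hconc 1 k (by omega) hk1 hkm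
            have hz : x 0 = 0 := hx0 0 (Or.inl rfl)
            simp only [Nat.sub_self] at this
            omega
          have := nonincr_of (a := 0) hdec 0 (m-1) le_rfl (by omega) (by omega)
          have hz : x 0 = 0 := hx0 0 (Or.inl rfl)
          omega
        · omega
      obtain ⟨q, r, hxeq, c1, c2, c3, c4⟩ := machine hm hx0 hpos hconc hc1 hm1
      refine ⟨(0, q, r), ?_, hxeq.symm⟩
      rw [Finset.mem_coe, mem_Pset]
      exact ⟨Or.inl rfl, by omega, c1, by omega, fun h => ⟨rfl, c3 h⟩⟩
    · -- x 1 = 2 case (via reflection)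
      push_neg at hc1
      have hx1le : x 1 ≤ 2 := by
        by_contra hgt
        push_neg at hgt
        have hxm1 : x (m-1) = 0 := by omega
        have hinc : ∀ k, 1 ≤ k → k ≤ m → 0 ≤ x k - x (k-1) := by
          intro k hk1 hkm
          have := dmono hm hconc k m hk1 hkm le_rfl
          have hz : x m = 0 := hx0 m (Or.inr le_rfl)
          omega
        have := nondecr_of (a := m) hinc 1 m (by omega) le_rfl
        have hz : x m = 0 := hx0 m (Or.inr le_rfl)
        omega
      have hx1 : x 1 = 2 := by omega
      have hxm1le : x (m-1) ≤ 1 := by omega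
      obtain ⟨hy0, hypos, hyconc⟩ := refl_mem hm hx0 hpos hconc
      have he1 : m - (m-1) = 1 := by omega
      obtain ⟨q, r, hyeq, c1, c2, c3, c4⟩ :=
        machine (x := fun i => x (m - i)) hm hy0 hypos hyconc
          (by show x (m - 1) ≤ 1; exact hxm1le)
          (by show x (m - (m-1)) ≤ 2; rw [he1]; omega)
      have hr1 : 1 ≤ r := c4 (by show (2:ℤ) ≤ x (m - (m-1)); rw [he1]; omega)
      refine ⟨(r, q, 0), ?_, ?_⟩
      · rw [Finset.mem_coe, mem_Pset]
        exact ⟨Or.inr rfl, c1, by omega, by omega, fun h => ⟨c3 h, rfl⟩⟩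
      · show gfun m r q 0 = x
        rw [← refl_gfun 0 q r, ← hyeq]
        funext i
        show x (m - (m - i)) = x i
        rcases Nat.lt_or_ge i m with h | h
        · congr 1; omega
        · rw [hx0 i (by omega)]
          have h2 : m - (m - i) = m := by omega
          rw [h2, hx0 m (by omega)]
  · rintro y ⟨⟨p, q, r⟩, hmem, rfl⟩
    rw [Finset.mem_coe, mem_Pset] at hmem
    obtain ⟨c0, c1, c2, c3, c4⟩ := hmem
    exact gfun_mem hm c0 c1 c2 c3 c4

lemma gfun_injOn {m : ℕ} (hm : 2 ≤ m) :
    Set.InjOn (fun t : ℕ×ℕ×ℕ => gfun m t.1 t.2.1 t.2.2) ↑(Pset m) := by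
  rintro ⟨p, q, r⟩ h1 ⟨p', q', r'⟩ h2 heq
  rw [Finset.mem_coe, mem_Pset] at h1 h2
  obtain ⟨a0, a1, a2, a3, a4⟩ := h1
  obtain ⟨b0, b1, b2, b3, b4⟩ := h2
  simp only at heq
  have hqm : q ≤ m := by omega
  have hqm' : q' ≤ m := by omega
  have hfun : ∀ i, gfun m p q r i = gfun m p' q' r' i := fun i => congrFun heq i
  -- q = q'
  have hq : q = q' := by
    rcases Nat.eq_zero_or_pos q with h | h
    · rcases Nat.eq_zero_or_pos q' with h' | h'
      · omega
      · have := gfun_attains hm b0 b1 b2 b3 h'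
        rw [← hfun] at this
        have hle := gfun_le_q (p := p) (q := q) (r := r) a0 a1 a2 a3 (q' - p')
        rw [this] at hle
        have : (q':ℤ) ≤ q := by exact_mod_cast hle
        omega
    · have hatt := gfun_attains hm a0 a1 a2 a3 h
      rw [hfun] at hatt
      have hle := gfun_le_q b0 b1 b2 b3 (q - p)
      rw [hatt] at hle
      have h1' : (q:ℤ) ≤ q' := by exact_mod_cast hle
      rcases Nat.eq_zero_or_pos q' with h' | h'
      · omega
      · have hatt' := gfun_attains hm b0 b1 b2 b3 h'
        rw [← hfun] at hatt'
        have hle' := gfun_le_q a0 a1 a2 a3 (q' - p')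
        rw [hatt'] at hle'
        have h2' : (q':ℤ) ≤ q := by exact_mod_cast hle'
        omega
  -- p = p'
  have hp : p = p' := by
    by_contra hne
    have hpm : p ≤ m := by omega
    have hpm' : p' ≤ m := by omega
    rcases Nat.lt_or_ge p p' with hlt | hge
    · have i := p + 1
      have hh := gfun_head hm b0 b1 b2 b3 b4 (p+1) (by omega) (by omega)
      have hh' := gfun_head hm a0 a1 a2 a3 a4 (p+1) (by omega) (by omega)
      rw [hfun, hfun] at hh'
      omega
    · have hlt : p' < p := by omega
      have hh := gfun_head hm a0 a1 a2 a3 a4 (p'+1) (by omega) (by omega)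
      have hh' := gfun_head hm b0 b1 b2 b3 b4 (p'+1) (by omega) (by omega)
      rw [← hfun, ← hfun] at hh'
      omega
  -- r = r'
  have hrr : r = r' := by
    by_contra hne
    have hrm : r ≤ m := by omega
    have hrm' : r' ≤ m := by omega
    rcases Nat.lt_or_ge r r' with hlt | hge
    · have hh := gfun_tail hm b0 b1 b2 b3 b4 (m - r' + 1) (by omega) (by omega)
      have hh' := gfun_tail hm a0 a1 a2 a3 a4 (m - r' + 1) (by omega) (by omega)
      rw [hfun, hfun] at hh'
      omega
    · have hlt : r' < r := by omega
      have hh := gfun_tail hm a0 a1 a2 a3 a4 (m - r + 1) (by omega) (by omega)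
      have hh' := gfun_tail hm b0 b1 b2 b3 b4 (m - r + 1) (by omega) (by omega)
      rw [← hfun, ← hfun] at hh'
      omega
  simp [hq, hp, hrr]


def Aset (m : ℕ) : Finset ℕ := (range (m+1)).filter (fun q => 1 ≤ q ∧ 2*q ≤ m)
def Bset (m : ℕ) : Finset (ℕ×ℕ) :=
  ((range (m+1)) ×ˢ (range (m+1))).filter (fun t => 1 ≤ t.1 ∧ 3*t.1 + 2*t.2 ≤ m)

lemma mem_Bset {m r c : ℕ} : (r,c) ∈ Bset m ↔ 1 ≤ r ∧ 3*r + 2*c ≤ m := by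
  unfold Bset
  simp only [mem_filter, mem_product, mem_range]
  constructor
  · rintro ⟨-, h⟩; exact h
  · rintro ⟨h1, h2⟩; exact ⟨⟨by omega, by omega⟩, h1, h2⟩

lemma Aset_card (m : ℕ) : (Aset m).card = m / 2 := by
  have : Aset m = Finset.Icc 1 (m/2) := by
    ext a
    simp only [Aset, mem_filter, mem_range, Finset.mem_Icc]
    omega
  rw [this, Nat.card_Icc]
  omega

lemma cnt (e : ℕ) (he : e < 2) : ∀ K, (((range (K+1)).filter (fun j => 1 ≤ j ∧ j % 2 = e)).card) = (K + e)/2 := by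
  intro K
  induction K with
  | zero =>
    rw [show (0:ℕ)+1 = 1 from rfl]
    rw [show range 1 = {0} from rfl]
    rw [filter_singleton]
    split_ifs with h
    · omega
    · simp; omega
  | succ K ih =>
    rw [Finset.range_add_one, filter_insert]
    split_ifs with h
    · rw [Finset.card_insert_of_notMem (by simp)]
      omega
    · rw [ih]
      omega

lemma Bset_delta (m : ℕ) (hm : 1 ≤ m) :
    (Bset m).card = (Bset (m-1)).card + (m/3 + m % 2)/2 := by
  have hsub : Bset (m-1) ⊆ Bset m := by
    rintro ⟨r,c⟩ h
    rw [mem_Bset] at *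
    omega
  have hdiff : Bset m \ Bset (m-1) =
      ((range (m+1)).filter (fun j => 1 ≤ j ∧ 3*j ≤ m ∧ j % 2 = m % 2)).image
        (fun j => (j, (m - 3*j)/2)) := by
    ext ⟨r,c⟩
    simp only [Finset.mem_sdiff, mem_Bset, Finset.mem_image, mem_filter, mem_range]
    constructor
    · rintro ⟨⟨h1, h2⟩, hnot⟩
      have heq : 3*r + 2*c = m := by
        by_contra hne
        exact hnot ⟨h1, by omega⟩
      exact ⟨r, ⟨by omega, h1, by omega, by omega⟩, by rw [Prod.mk.injEq]; omega⟩
    · rintro ⟨j, ⟨hj0, hj1, hj2, hj3⟩, hpair⟩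
      rw [Prod.mk.injEq] at hpair
      obtain ⟨rfl, rfl⟩ := hpair
      refine ⟨⟨hj1, by omega⟩, ?_⟩
      omega
  have hcard2 : (Bset m \ Bset (m-1)).card = (m/3 + m % 2)/2 := by
    rw [hdiff, Finset.card_image_of_injOn (by intro a _ b _ h; simpa using congrArg Prod.fst h)]
    have : (range (m+1)).filter (fun j => 1 ≤ j ∧ 3*j ≤ m ∧ j % 2 = m % 2) =
        (range (m/3+1)).filter (fun j => 1 ≤ j ∧ j % 2 = m % 2) := by
      ext j
      simp only [mem_filter, mem_range]
      omega
    rw [this, cnt (m % 2) (by omega) (m/3)]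
  have := Finset.card_sdiff_add_card_eq_card hsub
  omega

lemma Pset_card (m : ℕ) : (Pset m).card = 1 + m/2 + 2 * (Bset m).card := by
  classical
  have hdecomp : Pset m =
      (({((0:ℕ),(0:ℕ),(0:ℕ))} : Finset (ℕ×ℕ×ℕ))
        ∪ (Aset m).image (fun q => ((0:ℕ), q, (0:ℕ))))
        ∪ ((Bset m).image (fun t => ((0:ℕ), t.2 + 2*t.1, t.1))
        ∪ (Bset m).image (fun t => (t.1, t.2 + 2*t.1, (0:ℕ)))) := by
    ext ⟨p, q, r⟩
    simp only [mem_union, Finset.mem_singleton, Finset.mem_image, mem_Pset,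
      Prod.mk.injEq, Aset, mem_filter, mem_range]
    constructor
    · rintro ⟨h0, h1, h2, h3, h4⟩
      rcases Nat.eq_zero_or_pos q with hq | hq
      · left; left
        obtain ⟨hp, hr⟩ := h4 hq
        simp [hp, hq, hr]
      · rcases Nat.eq_zero_or_pos r with hr | hr
        · rcases Nat.eq_zero_or_pos p with hp | hp
          · left; right
            exact ⟨q, ⟨by omega, by omega, by omega⟩, by omega, rfl, by omega⟩
          · right; right
            refine ⟨(p, q - 2*p), ?_, by omega, by omega, by omega⟩
            rw [mem_Bset]
            omega
        · have hp : p = 0 := by rcases h0 with h|h; exact h; omega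
          right; left
          refine ⟨(r, q - 2*r), ?_, by omega, by omega, by omega⟩
          rw [mem_Bset]
          omega
    · rintro ((⟨hp, hq, hr⟩ | ⟨a, ⟨ha1, ha2, ha3⟩, hp, hq, hr⟩) |
        (⟨⟨rr,cc⟩, hmem, hp, hq, hr⟩ | ⟨⟨rr,cc⟩, hmem, hp, hq, hr⟩))
      · subst hp; subst hq; subst hr
        refine ⟨Or.inl rfl, by omega, by omega, by omega, fun _ => ⟨rfl, rfl⟩⟩
      · subst hp; subst hq; subst hr
        refine ⟨Or.inl rfl, by omega, by omega, by omega, by omega⟩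
      · rw [mem_Bset] at hmem
        subst hp; subst hq; subst hr
        refine ⟨Or.inl rfl, by omega, by omega, by omega, by omega⟩
      · rw [mem_Bset] at hmem
        subst hp; subst hq; subst hr
        refine ⟨Or.inr rfl, by omega, by omega, by omega, by omega⟩
  rw [hdecomp]
  have hinjA : Set.InjOn (fun q => ((0:ℕ), q, (0:ℕ))) ((Aset m : Finset ℕ) : Set ℕ) := by
    intro a _ b _ h
    simpa using h
  have hinjB : Set.InjOn (fun t : ℕ×ℕ => ((0:ℕ), t.2 + 2*t.1, t.1)) ((Bset m : Finset (ℕ×ℕ)) : Set (ℕ×ℕ)) := by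
    rintro ⟨a1,a2⟩ _ ⟨b1,b2⟩ _ h
    simp only [Prod.mk.injEq] at h ⊢
    omega
  have hinjC : Set.InjOn (fun t : ℕ×ℕ => (t.1, t.2 + 2*t.1, (0:ℕ))) ((Bset m : Finset (ℕ×ℕ)) : Set (ℕ×ℕ)) := by
    rintro ⟨a1,a2⟩ _ ⟨b1,b2⟩ _ h
    simp only [Prod.mk.injEq] at h ⊢
    omega
  have d1 : Disjoint ({((0:ℕ),(0:ℕ),(0:ℕ))} : Finset (ℕ×ℕ×ℕ))
      ((Aset m).image (fun q => ((0:ℕ), q, (0:ℕ)))) := by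
    rw [Finset.disjoint_left]
    rintro a ha hb
    simp only [Finset.mem_singleton] at ha
    subst ha
    simp only [Finset.mem_image, Aset, mem_filter, mem_range, Prod.mk.injEq] at hb
    obtain ⟨b, ⟨_, hb1, _⟩, _, hbq, _⟩ := hb
    omega
  have d2 : Disjoint ((Bset m).image (fun t : ℕ×ℕ => ((0:ℕ), t.2 + 2*t.1, t.1)))
      ((Bset m).image (fun t : ℕ×ℕ => (t.1, t.2 + 2*t.1, (0:ℕ)))) := by
    rw [Finset.disjoint_left]
    rintro ⟨p,q,r⟩ ha hb
    simp only [Finset.mem_image, Prod.mk.injEq] at ha hb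
    obtain ⟨⟨a1,a2⟩, hamem, ha1, ha2, ha3⟩ := ha
    obtain ⟨⟨b1,b2⟩, hbmem, hb1, hb2, hb3⟩ := hb
    rw [mem_Bset] at hamem hbmem
    omega
  have d3 : Disjoint (({((0:ℕ),(0:ℕ),(0:ℕ))} : Finset (ℕ×ℕ×ℕ))
        ∪ (Aset m).image (fun q => ((0:ℕ), q, (0:ℕ))))
      ((Bset m).image (fun t : ℕ×ℕ => ((0:ℕ), t.2 + 2*t.1, t.1))
        ∪ (Bset m).image (fun t : ℕ×ℕ => (t.1, t.2 + 2*t.1, (0:ℕ)))) := by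
    rw [Finset.disjoint_left]
    rintro ⟨p,q,r⟩ ha hb
    simp only [mem_union, Finset.mem_singleton, Finset.mem_image, Aset, mem_filter,
      mem_range, Prod.mk.injEq] at ha hb
    rcases hb with ⟨⟨b1,b2⟩, hbmem, hb1, hb2, hb3⟩ | ⟨⟨b1,b2⟩, hbmem, hb1, hb2, hb3⟩ <;>
      rw [mem_Bset] at hbmem <;>
      rcases ha with ⟨hp, hq, hr⟩ | ⟨a, ⟨_, ha1, _⟩, hp, hq, hr⟩ <;> omega
  rw [Finset.card_union_of_disjoint d3, Finset.card_union_of_disjoint d1,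
    Finset.card_union_of_disjoint d2, Finset.card_singleton,
    Finset.card_image_of_injOn hinjA, Finset.card_image_of_injOn hinjB,
    Finset.card_image_of_injOn hinjC]
  have : Aset m = Finset.Icc 1 (m/2) := by
    ext a
    simp only [Aset, mem_filter, mem_range, Finset.mem_Icc]
    omega
  rw [this, Nat.card_Icc]
  omega

/-- `uCount m` is the number of nonnegative integer tuples `(x_1, …, x_{m-1})` with
`(Ax)_i ≥ 0` for all `1 ≤ i ≤ m-1` (with `x_0 = x_m = 0`) and `x_1 + x_{m-1} ≤ 3`,
i.e. the number of maximal dominant weights of the level-3 module `V(3Λ_0)`.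
(Tuples are encoded as functions `ℕ → ℤ` vanishing at `0` and from `m` on.) -/
noncomputable def uCount (m : ℕ) : ℕ :=
  Set.ncard {x : ℕ → ℤ |
    (∀ i, i = 0 ∨ m ≤ i → x i = 0) ∧
    (∀ i, 1 ≤ i → i ≤ m - 1 → 0 ≤ x i) ∧
    (∀ i, 1 ≤ i → i ≤ m - 1 → 0 ≤ -x (i - 1) + 2 * x i - x (i + 1)) ∧
    x 1 + x (m - 1) ≤ 3}

lemma uCount_eq (m : ℕ) (hm : 2 ≤ m) : uCount m = 1 + m/2 + 2*(Bset m).card := by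
  have h1 : uCount m = Set.ncard (Sset m) := rfl
  rw [h1, Sset_eq hm, Set.ncard_image_of_injOn (gfun_injOn hm), Set.ncard_coe_finset,
    Pset_card]

/-- Lemma 2.6 of Jayne–Misra: for `n ≥ 6`,
`u_n = 2u_{n-1} - u_{n-2} + 1` if `n ≡ 0, 2 (mod 3)` and
`u_n = 2u_{n-1} - u_{n-2} - 1` if `n ≡ 1 (mod 3)`. -/
theorem stmt_11 (n : ℕ) (hn : 6 ≤ n) :
    ((n % 3 = 0 ∨ n % 3 = 2) →
      (uCount n : ℤ) = 2 * uCount (n - 1) - uCount (n - 2) + 1) ∧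
    (n % 3 = 1 →
      (uCount n : ℤ) = 2 * uCount (n - 1) - uCount (n - 2) - 1) := by
  obtain ⟨k, rfl⟩ : ∃ k, n = k + 2 := ⟨n - 2, by omega⟩
  have hk : 4 ≤ k := by omega
  have e0 := uCount_eq (k+2) (by omega)
  have e1 := uCount_eq (k+1) (by omega)
  have e2 := uCount_eq k (by omega)
  have d2 := Bset_delta (k+2) (by omega)
  have d1 := Bset_delta (k+1) (by omega)
  have s2 : k + 2 - 1 = k + 1 := rfl
  have s1 : k + 1 - 1 = k := rfl
  rw [s2] at d2
  rw [s1] at d1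
  have g2 : k + 2 - 2 = k := rfl
  rw [s2, g2, e0, e1, e2]
  constructor
  · intro h
    rcases h with h | h <;> omega
  · intro h
    omega
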